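/- arXiv:0912.2700 — 2 statements merged into one kernel-verified Lean document; each statement's English description precedes it below -/
import Mathlib

section
/- Consider the transverse integrated eigenvalue system for σ = ∞: μ μ₀ w'' = μ₀ v̂ λ w + μ₀ v̂ w' - I α' and α' = I w' - λ α on ℝ, where v̂ : ℝ → ℝ is C¹ with v̂ > 0 and v̂' < 0 everywhere, and μ, μ₀ > 0, I ∈ ℝ, λ ∈ ℂ with Re λ ≥ 0 and λ ≠ 0. If (w, α) is a solution with w, w', w'', α, α' ∈ L²(ℝ) and w, w' → 0 at ±∞, then w ≡ 0. -/
/-!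
Along a solution, the energy `E = μ μ₀ ⟪w, w'⟫ - (μ₀ / 2) v̂ ‖w‖² + I ⟪w, α⟫ - ‖α‖² / 2`
(real inner product on `ℂ`) has derivative
`E' = μ μ₀ ‖w'‖² + Re λ (μ₀ v̂ ‖w‖² + ‖α‖²) - (μ₀ / 2) v̂' ‖w‖² ≥ 0`; this is the paper's
energy identity in pointwise form. Functions in `L²` with derivative in `L²` vanish at `±∞`, so
`w`, `w'`, `α` do, and `E` tends to `0` at both ends. Being nondecreasing, `E ≡ 0`, so `E' ≡ 0`
and `-v̂' ‖w‖² ≡ 0`, i.e. `w ≡ 0`.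

The delicate limit is `v̂ ‖w‖²` at `-∞`, where `v̂` may be unbounded. With `u = λ w + w'`, the
first equation gives `v̂ u ∈ L²`, and `(‖w‖²)' = 2 ⟪w, w'⟫ ≤ 2 ‖w‖ ‖u‖` since `Re λ ≥ 0`; as `v̂`
decreases, `v̂(x) ‖w(x)‖² ≤ 2 ∫_{-∞}^x ‖w‖ v̂ ‖u‖ → 0`.
-/

open MeasureTheory Filter Set Topology
open scoped InnerProductSpace

section SquareIntegrable

variable {E : Type*} [NormedAddCommGroup E] {f f' : ℝ → E}

theorem tendsto_mul_norm_sq_atTop {v : ℝ → ℝ} (hv : Antitone v) (hv0 : ∀ x, 0 ≤ v x)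
    (hf : Tendsto f atTop (𝓝 0)) : Tendsto (fun x => v x * ‖f x‖ ^ 2) atTop (𝓝 0) := by
  refine isBoundedUnder_le_mul_tendsto_zero ⟨v 0, eventually_map.2 ?_⟩
    (by simpa using hf.norm.pow 2)
  filter_upwards [eventually_ge_atTop 0] with x hx
  simpa [abs_of_nonneg (hv0 x)] using hv hx

variable [InnerProductSpace ℝ E]

theorem MeasureTheory.MemLp.integrable_real_inner {α : Type*} {m : MeasurableSpace α}
    {μ : Measure α} {f g : α → E} (hf : MemLp f 2 μ) (hg : MemLp g 2 μ) :
    Integrable (fun x => ⟪f x, g x⟫_ℝ) μ :=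
  (hf.norm.integrable_mul hg.norm).mono' (hf.1.inner hg.1)
    (ae_of_all _ fun x => abs_real_inner_le_norm (f x) (g x))

theorem tendsto_zero_of_memLp_two (hf : ∀ x, HasDerivAt f (f' x) x) (h : MemLp f 2)
    (h' : MemLp f' 2) : Tendsto f atBot (𝓝 0) ∧ Tendsto f atTop (𝓝 0) := by
  have hderiv : ∀ x, HasDerivAt (‖f ·‖ ^ 2) (2 * ⟪f x, f' x⟫_ℝ) x := fun x => (hf x).norm_sq
  have hderiv_int : Integrable fun x => 2 * ⟪f x, f' x⟫_ℝ :=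
    (h.integrable_real_inner h').const_mul 2
  have hsq_int : Integrable (‖f ·‖ ^ 2) := h.integrable_norm_pow two_ne_zero
  have of_norm_sq {l : Filter ℝ} (hl : Tendsto (‖f ·‖ ^ 2) l (𝓝 0)) : Tendsto f l (𝓝 0) := by
    rw [tendsto_zero_iff_norm_tendsto_zero]
    simpa [Real.sqrt_sq (norm_nonneg _)] using hl.sqrt
  exact ⟨of_norm_sq <| tendsto_zero_of_hasDerivAt_of_integrableOn_Iic (a := 0)
      (fun x _ => hderiv x) hderiv_int.integrableOn hsq_int.integrableOn,
    of_norm_sq <| tendsto_zero_of_hasDerivAt_of_integrableOn_Ioi (a := 0)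
      (fun x _ => hderiv x) hderiv_int.integrableOn hsq_int.integrableOn⟩

theorem tendsto_mul_norm_sq_atBot_of_memLp_two {v : ℝ → ℝ} {g : ℝ → E} (hv : Antitone v)
    (hv0 : ∀ x, 0 ≤ v x) (hf : ∀ x, HasDerivAt f (f' x) x) (h : MemLp f 2) (h' : MemLp f' 2)
    (hg : MemLp (fun x => v x * ‖g x‖) 2) (hfg : ∀ x, ⟪f x, f' x⟫_ℝ ≤ ‖f x‖ * ‖g x‖) :
    Tendsto (fun x => v x * ‖f x‖ ^ 2) atBot (𝓝 0) := by
  have hderiv_int : Integrable fun x => 2 * ⟪f x, f' x⟫_ℝ :=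
    (h.integrable_real_inner h').const_mul 2
  have hbound_int : Integrable fun x => 2 * (‖f x‖ * (v x * ‖g x‖)) :=
    (h.norm.integrable_mul hg).const_mul 2
  have hftc (x : ℝ) : ‖f x‖ ^ 2 = ∫ s in Iic x, 2 * ⟪f s, f' s⟫_ℝ := by
    rw [integral_Iic_of_hasDerivAt_of_tendsto' (fun s _ => (hf s).norm_sq)
      hderiv_int.integrableOn (by simpa using ((tendsto_zero_of_memLp_two hf h h').1.norm.pow 2)),
      sub_zero]
  have hbound (x : ℝ) : v x * ‖f x‖ ^ 2 ≤ ∫ s in Iic x, 2 * (‖f s‖ * (v s * ‖g s‖)) := by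
    rw [hftc, ← integral_const_mul]
    refine setIntegral_mono_on (hderiv_int.const_mul _).integrableOn hbound_int.integrableOn
      measurableSet_Iic fun s (hs : s ≤ x) => ?_
    calc v x * (2 * ⟪f s, f' s⟫_ℝ) ≤ v x * (2 * (‖f s‖ * ‖g s‖)) := by
          gcongr
          · exact hv0 x
          · exact hfg s
      _ ≤ v s * (2 * (‖f s‖ * ‖g s‖)) := by gcongr; exact hv hs
      _ = 2 * (‖f s‖ * (v s * ‖g s‖)) := by ring
  exact squeeze_zero (fun x => by have := hv0 x; positivity) hbound
    (tendsto_integral_Iic_zero tendsto_id)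

end SquareIntegrable

theorem Complex.real_inner_le_norm_mul_norm_mul_add {c : ℂ} (hc : 0 ≤ c.re) (z y : ℂ) :
    ⟪z, y⟫_ℝ ≤ ‖z‖ * ‖c * z + y‖ := by
  have hcz : 0 ≤ ⟪z, c * z⟫_ℝ := by
    simp only [Complex.inner, Complex.mul_re, Complex.mul_im, Complex.conj_re, Complex.conj_im]
    nlinarith [mul_nonneg hc (add_nonneg (sq_nonneg z.re) (sq_nonneg z.im))]
  calc ⟪z, y⟫_ℝ ≤ ⟪z, c * z + y⟫_ℝ := by rw [inner_add_right]; linarith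
    _ ≤ ‖z‖ * ‖c * z + y‖ := real_inner_le_norm _ _

section TransverseSystem

variable (μ μ₀ I : ℝ) (lam : ℂ) (vh vh' : ℝ → ℝ) (w w' α : ℝ → ℂ)

noncomputable def transverseEnergy (x : ℝ) : ℝ :=
  μ * μ₀ * ⟪w x, w' x⟫_ℝ - μ₀ / 2 * (vh x * ‖w x‖ ^ 2) + I * ⟪w x, α x⟫_ℝ - ‖α x‖ ^ 2 / 2

noncomputable def transverseDissipation (x : ℝ) : ℝ :=
  μ * μ₀ * ‖w' x‖ ^ 2 + lam.re * μ₀ * vh x * ‖w x‖ ^ 2 - μ₀ / 2 * vh' x * ‖w x‖ ^ 2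
    + lam.re * ‖α x‖ ^ 2

variable {μ μ₀ I lam vh vh' w w' α}

theorem hasDerivAt_transverseEnergy {w'' α' : ℝ → ℂ} {x : ℝ}
    (hvh : HasDerivAt vh (vh' x) x) (hw : HasDerivAt w (w' x) x)
    (hw' : HasDerivAt w' (w'' x) x) (hα : HasDerivAt α (α' x) x)
    (heq1 : (↑(μ * μ₀) : ℂ) * w'' x =
      (↑(μ₀ * vh x) : ℂ) * lam * w x + (↑(μ₀ * vh x) : ℂ) * w' x - (↑I : ℂ) * α' x)
    (heq2 : α' x = (↑I : ℂ) * w' x - lam * α x) :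
    HasDerivAt (transverseEnergy μ μ₀ I vh w w' α)
      (transverseDissipation μ μ₀ lam vh vh' w w' α x) x := by
  have hE := ((((hw.inner ℝ hw').const_mul (μ * μ₀)).sub
    ((hvh.mul hw.norm_sq).const_mul (μ₀ / 2))).add ((hw.inner ℝ hα).const_mul I)).sub
    (hα.norm_sq.div_const 2)
  refine hE.congr_deriv ?_
  obtain ⟨h1re, h1im⟩ := Complex.ext_iff.mp heq1
  obtain ⟨h2re, h2im⟩ := Complex.ext_iff.mp heq2
  simp only [Complex.add_re, Complex.sub_re, Complex.mul_re, Complex.mul_im, Complex.add_im,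
    Complex.sub_im, Complex.ofReal_re, Complex.ofReal_im] at h1re h1im h2re h2im
  simp only [transverseDissipation, Complex.inner, Complex.mul_re, Complex.conj_re,
    Complex.conj_im, Complex.sq_norm, Complex.normSq_apply]
  linear_combination (w x).re * h1re + (w x).im * h1im - (α x).re * h2re - (α x).im * h2im

theorem tendsto_transverseEnergy {l : Filter ℝ} (hw : Tendsto w l (𝓝 0))
    (hw' : Tendsto w' l (𝓝 0)) (hα : Tendsto α l (𝓝 0))
    (hvw : Tendsto (fun x => vh x * ‖w x‖ ^ 2) l (𝓝 0)) :
    Tendsto (transverseEnergy μ μ₀ I vh w w' α) l (𝓝 0) := by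
  unfold transverseEnergy
  simpa using ((((hw.inner hw').const_mul (μ * μ₀)).sub (hvw.const_mul (μ₀ / 2))).add
    ((hw.inner hα).const_mul I)).sub ((hα.norm.pow 2).div_const 2)

theorem neg_mul_norm_sq_le_transverseDissipation (hμ : 0 ≤ μ) (hμ₀ : 0 ≤ μ₀)
    (hre : 0 ≤ lam.re) {x : ℝ} (hvh : 0 ≤ vh x) :
    -(μ₀ / 2 * vh' x) * ‖w x‖ ^ 2 ≤ transverseDissipation μ μ₀ lam vh vh' w w' α x := by
  have hw' : 0 ≤ μ * μ₀ * ‖w' x‖ ^ 2 := mul_nonneg (mul_nonneg hμ hμ₀) (sq_nonneg _)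
  have hw : 0 ≤ lam.re * μ₀ * vh x * ‖w x‖ ^ 2 :=
    mul_nonneg (mul_nonneg (mul_nonneg hre hμ₀) hvh) (sq_nonneg _)
  have hα : 0 ≤ lam.re * ‖α x‖ ^ 2 := mul_nonneg hre (sq_nonneg _)
  unfold transverseDissipation
  linarith

theorem memLp_two_mul_norm_mul_add {w'' α' : ℝ → ℂ} (hμ₀ : μ₀ ≠ 0) (hvh : ∀ x, 0 ≤ vh x)
    (heq1 : ∀ x, (↑(μ * μ₀) : ℂ) * w'' x =
      (↑(μ₀ * vh x) : ℂ) * lam * w x + (↑(μ₀ * vh x) : ℂ) * w' x - (↑I : ℂ) * α' x)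
    (hw'' : MemLp w'' 2) (hα' : MemLp α' 2) :
    MemLp (fun x => vh x * ‖lam * w x + w' x‖) 2 := by
  have hvh_mul (x : ℝ) : ((vh x : ℝ) : ℂ) * (lam * w x + w' x) =
      (μ : ℂ) * w'' x + ((I / μ₀ : ℝ) : ℂ) * α' x := by
    have : (μ₀ : ℂ) ≠ 0 := by exact_mod_cast hμ₀
    push_cast at heq1 ⊢
    field_simp
    linear_combination -(heq1 x)
  have hvh_norm : (fun x => vh x * ‖lam * w x + w' x‖) =
      fun x => ‖(μ : ℂ) * w'' x + ((I / μ₀ : ℝ) : ℂ) * α' x‖ := funext fun x => by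
    rw [← hvh_mul, norm_mul, Complex.norm_real, Real.norm_of_nonneg (hvh x)]
  rw [hvh_norm]
  exact ((hw''.const_mul _).add (hα'.const_mul _)).norm

end TransverseSystem

theorem stmt8_general (μ μ₀ I : ℝ) (hμ : 0 < μ) (hμ₀ : 0 < μ₀)
    (lam : ℂ) (hre : 0 ≤ lam.re)
    (vh vh' : ℝ → ℝ)
    (hvh : ∀ x, HasDerivAt vh (vh' x) x)
    (hvhpos : ∀ x, 0 < vh x) (hvh'neg : ∀ x, vh' x < 0)
    (w w' w'' α α' : ℝ → ℂ)
    (hw : ∀ x, HasDerivAt w (w' x) x)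
    (hw' : ∀ x, HasDerivAt w' (w'' x) x)
    (hα : ∀ x, HasDerivAt α (α' x) x)
    (heq1 : ∀ x, (↑(μ * μ₀) : ℂ) * w'' x =
      (↑(μ₀ * vh x) : ℂ) * lam * w x + (↑(μ₀ * vh x) : ℂ) * w' x - (↑I : ℂ) * α' x)
    (heq2 : ∀ x, α' x = (↑I : ℂ) * w' x - lam * α x)
    (hL2w : MemLp w 2 volume) (hL2w' : MemLp w' 2 volume)
    (hL2w'' : MemLp w'' 2 volume)
    (hL2α : MemLp α 2 volume) (hL2α' : MemLp α' 2 volume) :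
    ∀ x, w x = 0 := by
  set E := transverseEnergy μ μ₀ I vh w w' α
  set D := transverseDissipation μ μ₀ lam vh vh' w w' α
  have hE (x : ℝ) : HasDerivAt E (D x) x :=
    hasDerivAt_transverseEnergy (hvh x) (hw x) (hw' x) (hα x) (heq1 x) (heq2 x)
  have hD (x : ℝ) : -(μ₀ / 2 * vh' x) * ‖w x‖ ^ 2 ≤ D x :=
    neg_mul_norm_sq_le_transverseDissipation hμ.le hμ₀.le hre (hvhpos x).le
  have hcoef (x : ℝ) : 0 < -(μ₀ / 2 * vh' x) :=
    neg_pos.2 (mul_neg_of_pos_of_neg (half_pos hμ₀) (hvh'neg x))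
  have hD0 (x : ℝ) : 0 ≤ D x := (mul_nonneg (hcoef x).le (sq_nonneg _)).trans (hD x)
  have hvh_anti : Antitone vh := (strictAnti_of_hasDerivAt_neg hvh hvh'neg).antitone
  have hvh0 (x : ℝ) : 0 ≤ vh x := (hvhpos x).le
  obtain ⟨hw_bot, hw_top⟩ := tendsto_zero_of_memLp_two hw hL2w hL2w'
  obtain ⟨hw'_bot, hw'_top⟩ := tendsto_zero_of_memLp_two hw' hL2w' hL2w''
  obtain ⟨hα_bot, hα_top⟩ := tendsto_zero_of_memLp_two hα hL2α hL2α'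
  have hE_top : Tendsto E atTop (𝓝 0) := tendsto_transverseEnergy hw_top hw'_top hα_top
    (tendsto_mul_norm_sq_atTop hvh_anti hvh0 hw_top)
  have hE_bot : Tendsto E atBot (𝓝 0) := tendsto_transverseEnergy hw_bot hw'_bot hα_bot
    (tendsto_mul_norm_sq_atBot_of_memLp_two hvh_anti hvh0 hw hL2w hL2w'
      (memLp_two_mul_norm_mul_add hμ₀.ne' hvh0 heq1 hL2w'' hL2α')
      fun x => Complex.real_inner_le_norm_mul_norm_mul_add hre (w x) (w' x))
  have hE_mono : Monotone E := monotone_of_hasDerivAt_nonneg hE hD0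
  have hE_const : E = fun _ => 0 :=
    funext fun x => le_antisymm (hE_mono.ge_of_tendsto hE_top x) (hE_mono.le_of_tendsto hE_bot x)
  intro x
  have hDx : D x = 0 := (hE x).unique (hE_const ▸ hasDerivAt_const x 0)
  have hwx : ‖w x‖ ^ 2 ≤ 0 := nonpos_of_mul_nonpos_right ((hD x).trans_eq hDx) (hcoef x)
  simpa using hwx

/-- Transverse stability of monotone profiles (σ = ∞): the transverse integrated
eigenvalue system has no nontrivial decaying/L² solution for `Re λ ≥ 0`, `λ ≠ 0`,
when the profile `v̂` is positive and strictly decreasing. -/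
theorem stmt8 (μ μ₀ I : ℝ) (hμ : 0 < μ) (hμ₀ : 0 < μ₀)
    (lam : ℂ) (hre : 0 ≤ lam.re) (hlam : lam ≠ 0)
    (vh vh' : ℝ → ℝ)
    (hvh : ∀ x, HasDerivAt vh (vh' x) x)
    (hvh'cont : Continuous vh')
    (hvhpos : ∀ x, 0 < vh x) (hvh'neg : ∀ x, vh' x < 0)
    (w w' w'' α α' : ℝ → ℂ)
    (hw : ∀ x, HasDerivAt w (w' x) x)
    (hw' : ∀ x, HasDerivAt w' (w'' x) x)
    (hα : ∀ x, HasDerivAt α (α' x) x)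
    (heq1 : ∀ x, (↑(μ * μ₀) : ℂ) * w'' x =
      (↑(μ₀ * vh x) : ℂ) * lam * w x + (↑(μ₀ * vh x) : ℂ) * w' x - (↑I : ℂ) * α' x)
    (heq2 : ∀ x, α' x = (↑I : ℂ) * w' x - lam * α x)
    (hL2w : MemLp w 2 volume) (hL2w' : MemLp w' 2 volume)
    (hL2w'' : MemLp w'' 2 volume)
    (hL2α : MemLp α 2 volume) (hL2α' : MemLp α' 2 volume)
    (hwtop : Tendsto w atTop (nhds 0)) (hwbot : Tendsto w atBot (nhds 0))
    (hw'top : Tendsto w' atTop (nhds 0)) (hw'bot : Tendsto w' atBot (nhds 0)) :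
    ∀ x, w x = 0 :=
  stmt8_general μ μ₀ I hμ hμ₀ lam hre vh vh' hvh hvhpos hvh'neg w w' w'' α α' hw hw' hα heq1 heq2
    hL2w hL2w' hL2w'' hL2α hL2α'
end

section
/- Let η : ℝⁿ → ℝ be C² with positive definite Hessian d²η, let F : ℝⁿ → ℝⁿ be C¹, s ∈ ℝ, U₋ ∈ ℝⁿ, and define φ(U) := s η(U) - q(U) + dη(U)·(F(U) - F(U₋) - s(U - U₋)) where q satisfies dq = dη · dF (i.e., ∇q(U)ᵀ = ∇η(U)ᵀ dF(U)). Then ∇φ(U) = d²η(U)(F(U) - F(U₋) - s(U - U₋)). -/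
/-!
Write `G(U) = F(U) - F(U₋) - s(U - U₋)`, so `φ = sη - q + ⟪∇η, G⟫`. By the product rule and the
symmetry of the Hessian, `dφ(U)X = ⟪d²η(U) G(U), X⟫ + dη(U)(dG(U)X) + s dη(U)X - dq(U)X`, and since
`dG = dF - s·id` and `dq = dη ∘ dF` the last three terms cancel.
-/

open RealInnerProductSpace InnerProductSpace

theorem ContDiffAt.differentiableAt_fderiv {𝕜 E F : Type*} [NontriviallyNormedField 𝕜]
    [NormedAddCommGroup E] [NormedSpace 𝕜 E] [NormedAddCommGroup F] [NormedSpace 𝕜 F] {f : E → F}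
    {x : E} (hf : ContDiffAt 𝕜 2 f x) : DifferentiableAt 𝕜 (fderiv 𝕜 f) x :=
  (hf.fderiv_right (m := 1) (by norm_num)).differentiableAt one_ne_zero

section

variable {E : Type*} [NormedAddCommGroup E] [InnerProductSpace ℝ E] [CompleteSpace E]

/-- The Riesz isomorphism `toDual` is conjugate-linear in general, but `ℝ`-linear over `ℝ`. -/
theorem hasFDerivAt_gradient {f : E → ℝ} {x : E} (hf : DifferentiableAt ℝ (fderiv ℝ f) x) :
    HasFDerivAt (gradient f)
      (((toDual ℝ E).symm.toLinearIsometry.toContinuousLinearMap : StrongDual ℝ E →L[ℝ] E).comp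
        (fderiv ℝ (fderiv ℝ f) x)) x :=
  ((toDual ℝ E).symm.toLinearIsometry.toContinuousLinearMap : StrongDual ℝ E →L[ℝ] E)
    |>.hasFDerivAt.comp x hf.hasFDerivAt

theorem inner_fderiv_gradient_apply {f : E → ℝ} {x : E} (hf : DifferentiableAt ℝ (fderiv ℝ f) x)
    (v w : E) : ⟪fderiv ℝ (gradient f) x v, w⟫ = fderiv ℝ (fderiv ℝ f) x v w := by
  rw [(hasFDerivAt_gradient hf).fderiv]
  exact toDual_symm_apply

theorem fderiv_inner_gradient_apply {f : E → ℝ} {G : E → E} {x : E} (hf : ContDiffAt ℝ 2 f x)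
    (hG : DifferentiableAt ℝ G x) (v : E) :
    fderiv ℝ (fun y => ⟪gradient f y, G y⟫) x v =
      ⟪fderiv ℝ (gradient f) x (G x), v⟫ + fderiv ℝ f x (fderiv ℝ G x v) := by
  have hf' := hf.differentiableAt_fderiv
  simp_rw [inner_gradient_left]
  rw [fderiv_clm_apply hf' hG, inner_fderiv_gradient_apply hf',
    hf.isSymmSndFDerivAt (by simp) (G x) v]
  simp only [add_apply, ContinuousLinearMap.coe_comp, Function.comp_apply,
    ContinuousLinearMap.flip_apply]
  ring

noncomputable def relEntropyPotential (η q : E → ℝ) (F : E → E) (s : ℝ) (Um : E) (U : E) : ℝ :=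
  s * η U - q U + ⟪gradient η U, F U - F Um - s • (U - Um)⟫

theorem gradient_relEntropyPotential {η q : E → ℝ} {F : E → E} {s : ℝ} {Um U : E}
    (hη : ContDiffAt ℝ 2 η U) (hF : DifferentiableAt ℝ F U) (hq : DifferentiableAt ℝ q U)
    (hdq : ∀ X, fderiv ℝ q U X = fderiv ℝ η U (fderiv ℝ F U X)) :
    gradient (relEntropyPotential η q F s Um) U =
      fderiv ℝ (gradient η) U (F U - F Um - s • (U - Um)) := by
  have hηU : DifferentiableAt ℝ η U := hη.differentiableAt two_ne_zero
  have hgradη : DifferentiableAt ℝ (gradient η) U :=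
    (hasFDerivAt_gradient hη.differentiableAt_fderiv).differentiableAt
  have hG : HasFDerivAt (fun V => F V - F Um - s • (V - Um))
      (fderiv ℝ F U - s • ContinuousLinearMap.id ℝ E) U :=
    (hF.hasFDerivAt.sub_const _).sub (((hasFDerivAt_id U).sub_const Um).const_smul s)
  refine ext_inner_right ℝ fun X => ?_
  rw [inner_gradient_left]
  unfold relEntropyPotential
  rw [fderiv_fun_add ((hηU.const_mul s).fun_sub hq) (hgradη.inner ℝ hG.differentiableAt),
    fderiv_fun_sub (hηU.const_mul s) hq, fderiv_const_mul hηU,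
    add_apply, fderiv_inner_gradient_apply hη hG.differentiableAt, hG.fderiv]
  simp only [sub_apply, smul_apply, hdq, map_sub, map_smul, smul_eq_mul,
    ContinuousLinearMap.id_apply]
  ring

end

theorem stmt9_general (n : ℕ)
    (η q φ : EuclideanSpace ℝ (Fin n) → ℝ)
    (F : EuclideanSpace ℝ (Fin n) → EuclideanSpace ℝ (Fin n))
    (s : ℝ) (Um : EuclideanSpace ℝ (Fin n))
    (hη : ContDiff ℝ 2 η) (hF : ContDiff ℝ 1 F) (hq : Differentiable ℝ q)
    (hdq : ∀ U X, fderiv ℝ q U X = fderiv ℝ η U ((fderiv ℝ F U) X))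
    (hφ : ∀ U, φ U = s * η U - q U +
      ⟪gradient η U, F U - F Um - s • (U - Um)⟫) :
    ∀ U, gradient φ U = (fderiv ℝ (gradient η) U) (F U - F Um - s • (U - Um)) := by
  intro U
  rw [show φ = relEntropyPotential η q F s Um from funext hφ]
  exact gradient_relEntropyPotential hη.contDiffAt (hF.differentiable one_ne_zero U) (hq U)
    (hdq U)

/-- Gradient of the relative entropy potential:
`∇φ(U) = d²η(U)(F(U) - F(Um) - s(U - Um))`. -/
theorem stmt9 (n : ℕ)
    (η q φ : EuclideanSpace ℝ (Fin n) → ℝ)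
    (F : EuclideanSpace ℝ (Fin n) → EuclideanSpace ℝ (Fin n))
    (s : ℝ) (Um : EuclideanSpace ℝ (Fin n))
    (hη : ContDiff ℝ 2 η) (hF : ContDiff ℝ 1 F) (hq : Differentiable ℝ q)
    (hpos : ∀ U X, X ≠ 0 → 0 < ⟪(fderiv ℝ (gradient η) U) X, X⟫)
    (hdq : ∀ U X, fderiv ℝ q U X = fderiv ℝ η U ((fderiv ℝ F U) X))
    (hφ : ∀ U, φ U = s * η U - q U +
      ⟪gradient η U, F U - F Um - s • (U - Um)⟫) :
    ∀ U, gradient φ U = (fderiv ℝ (gradient η) U) (F U - F Um - s • (U - Um)) :=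
  stmt9_general n η q φ F s Um hη hF hq hdq hφ
end
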